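/- With 𝒱, Φ, Υ as above: for any indexing set J and Φ-closed sets I and K_j (j ∈ J), we have I ∩ Υ(⋃_J K_j) ⊆ Φ(⋃_J (I ∩ K_j)). -/

import Mathlib

/-!
Let `D = Φ(⋃_J (I ∩ K_j))`. Since the `K_j` are down-sets, `I ∩ ↓(⋃_J K_j) ⊆ D`. At a successor
stage, a join `p ∈ I` of some `T ∈ 𝒰_Φ` has `T ⊆ I`, so by induction `T ⊆ D`, and `p ∈ D`
because `D` is `Φ`-closed and `𝒰_Φ` consists exactly of the sets whose joins lie in every
`Φ`-closed set containing them. Hence `I` meets every stage of `Υ`, whatever its length, inside `D`.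
-/

universe u

variable {P : Type u} [PartialOrder P]

/-- The downward closure of a set in a poset. -/
def dcl (S : Set P) : Set P := {q | ∃ s ∈ S, q ≤ s}

/-- A join-specification: a collection of nonempty subsets each having a join,
containing all singletons. -/
def IsJoinSpec (U : Set (Set P)) : Prop :=
  (∀ S ∈ U, ∃ j, IsLUB S j) ∧ (∀ p : P, {p} ∈ U) ∧ ∅ ∉ U

/-- A `U`-ideal: a down-set closed under joins of members of `U` contained in it. -/
def IsUIdeal (U : Set (Set P)) (I : Set P) : Prop :=
  IsLowerSet I ∧ ∀ S ∈ U, S ⊆ I → ∀ j, IsLUB S j → j ∈ I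

/-- The smallest `U`-ideal containing `S`. -/
def GammaU (U : Set (Set P)) (S : Set P) : Set P :=
  ⋂₀ {I | IsUIdeal U I ∧ S ⊆ I}

/-- A standard closure operator on the powerset of a poset. -/
def IsStdClosure (Γ : Set P → Set P) : Prop :=
  (∀ S, S ⊆ Γ S) ∧ (∀ S T, S ⊆ T → Γ S ⊆ Γ T) ∧ (∀ S, Γ (Γ S) = Γ S) ∧
  (∀ p : P, Γ {p} = {q | q ≤ p})

/-- The join-specification induced by a standard closure operator. -/
def UGamma (Γ : Set P → Set P) : Set (Set P) :=
  {S | (∃ j, IsLUB S j) ∧ ∀ C, Γ C = C → S ⊆ C → ∀ j, IsLUB S j → j ∈ C}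

/-- The radius of a join-specification: the smallest cardinal exceeding the
cardinality of each of its members. -/
noncomputable def radius (U : Set (Set P)) : Cardinal :=
  ⨆ S : U, Order.succ (Cardinal.mk S.1)

/-- The ordinal of the smallest regular cardinal at least the radius of `U`. -/
noncomputable def chiOrd (U : Set (Set P)) : Ordinal :=
  (sInf {c : Cardinal | c.IsRegular ∧ radius U ≤ c}).ord

/-- The transfinite iteration building the smallest `U`-ideal (with downward
closure at successor steps). -/
noncomputable def gammaIter (U : Set (Set P)) (S : Set P) (o : Ordinal) : Set P :=
  Ordinal.limitRecOn o (dcl S)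
    (fun _ ih => dcl {p | ∃ T ∈ U, T ⊆ ih ∧ IsLUB T p})
    (fun o _ ih => ⋃ (b : Ordinal) (h : b < o), ih b h)

/-- The transfinite iteration without downward closure at successor steps. -/
noncomputable def upsIter (U : Set (Set P)) (S : Set P) (o : Ordinal) : Set P :=
  Ordinal.limitRecOn o (dcl S)
    (fun _ ih => {p | ∃ T ∈ U, T ⊆ ih ∧ IsLUB T p})
    (fun o _ ih => ⋃ (b : Ordinal) (h : b < o), ih b h)

/-- The operator `Υ` built from `𝒰_Φ` where `Φ = Γ_𝒱`. -/
noncomputable def Upsilon (V : Set (Set P)) (S : Set P) : Set P :=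
  upsIter (UGamma (GammaU V)) S (chiOrd (UGamma (GammaU V)))

section GammaU

variable (U : Set (Set P)) (S : Set P)

lemma isUIdeal_gammaU : IsUIdeal U (GammaU U S) :=
  ⟨fun _ _ hba ha C hC => hC.1.1 hba (ha C hC),
    fun T hT hTS j hj C hC => hC.1.2 T hT (fun _ ht => hTS ht C hC) j hj⟩

lemma subset_gammaU : S ⊆ GammaU U S :=
  fun _ hs _ hC => hC.2 hs

lemma gammaU_subset {C : Set P} (hC : IsUIdeal U C) (hSC : S ⊆ C) : GammaU U S ⊆ C :=
  Set.sInter_subset_of_mem ⟨hC, hSC⟩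

lemma gammaU_gammaU : GammaU U (GammaU U S) = GammaU U S :=
  (gammaU_subset U _ (isUIdeal_gammaU U S) le_rfl).antisymm (subset_gammaU U _)

lemma isLowerSet_of_gammaU_eq {I : Set P} (hI : GammaU U I = I) : IsLowerSet I :=
  (hI ▸ isUIdeal_gammaU U I).1

end GammaU

section upsIter

variable {U : Set (Set P)} {S : Set P}

lemma upsIter_zero : upsIter U S 0 = dcl S := by
  rw [upsIter, Ordinal.limitRecOn_zero]

lemma upsIter_add_one (o : Ordinal) :
    upsIter U S (o + 1) = {p | ∃ T ∈ U, T ⊆ upsIter U S o ∧ IsLUB T p} := by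
  rw [upsIter, Ordinal.limitRecOn_add_one]
  rfl

lemma upsIter_of_isSuccLimit {o : Ordinal} (ho : Order.IsSuccLimit o) :
    upsIter U S o = ⋃ b < o, upsIter U S b := by
  rw [upsIter, Ordinal.limitRecOn_limit _ _ _ _ ho]
  rfl

end upsIter

lemma inter_dcl_sUnion_subset {I : Set P} {𝒦 : Set (Set P)} (h𝒦 : ∀ K ∈ 𝒦, IsLowerSet K) :
    I ∩ dcl (⋃₀ 𝒦) ⊆ ⋃ K ∈ 𝒦, I ∩ K := by
  rintro p ⟨hpI, s, ⟨K, hK, hsK⟩, hps⟩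
  exact Set.mem_biUnion hK ⟨hpI, h𝒦 K hK hps hsK⟩

lemma inter_upsIter_subset {Γ : Set P → Set P} {I C S : Set P} (hI : IsLowerSet I)
    (hC : Γ C = C) (hSC : I ∩ dcl S ⊆ C) (o : Ordinal) :
    I ∩ upsIter (UGamma Γ) S o ⊆ C := by
  induction o using Ordinal.limitRecOn with
  | zero => rwa [upsIter_zero]
  | add_one o ih =>
    rintro p ⟨hpI, hp⟩
    rw [upsIter_add_one] at hp
    obtain ⟨T, hTU, hTo, hTp⟩ := hp
    exact hTU.2 C hC (fun t ht => ih ⟨hI (hTp.1 ht) hpI, hTo ht⟩) p hTp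
  | limit o ho ih =>
    rintro p ⟨hpI, hp⟩
    rw [upsIter_of_isSuccLimit ho] at hp
    obtain ⟨b, hb, hpb⟩ := Set.mem_iUnion₂.1 hp
    exact ih b hb ⟨hpI, hpb⟩

theorem inter_upsilon_subset_general
    (V : Set (Set P))
    (I : Set P) (hI : GammaU V I = I)
    (𝒦 : Set (Set P)) (h𝒦 : ∀ K ∈ 𝒦, GammaU V K = K) :
    I ∩ Upsilon V (⋃₀ 𝒦) ⊆ GammaU V (⋃ K ∈ 𝒦, I ∩ K) :=
  inter_upsIter_subset (isLowerSet_of_gammaU_eq V hI) (gammaU_gammaU V _)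
    ((inter_dcl_sUnion_subset fun K hK => isLowerSet_of_gammaU_eq V (h𝒦 K hK)).trans
      (subset_gammaU V _)) _

theorem inter_upsilon_subset
    (V : Set (Set P)) (hV : IsJoinSpec V)
    (I : Set P) (hI : GammaU V I = I)
    (𝒦 : Set (Set P)) (h𝒦 : ∀ K ∈ 𝒦, GammaU V K = K) :
    I ∩ Upsilon V (⋃₀ 𝒦) ⊆ GammaU V (⋃ K ∈ 𝒦, I ∩ K) :=
  inter_upsilon_subset_general V I hI 𝒦 h𝒦
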